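/- Correctness of the integral separation procedure (Algorithm 1 identifies a violated compact-formulation constraint): Let p be an incentive assignment with p_i ∈ P_i for every i ∈ V, and suppose the propagation closure satisfies |A(p)| < ⌈α·n⌉. Then the set X = V ∖ A(p) satisfies |X| ≥ ⌊(1 − α)·n⌋ + 1 and p_i < p̃_i(X) for every i ∈ X; in particular, X defines a violated constraint of the compact formulation. -/

import Mathlib

open scoped Classical
open Finset

noncomputable section

/-- In-neighbors of `i` in the arc set `E`. -/
def Nbr {V : Type*} [Fintype V] (E : Finset (V × V)) (i : V) : Finset V :=
  Finset.univ.filter (fun j => (j, i) ∈ E)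

/-- Propagation iterates of the linear (Γ = 1) GLCIP: `A_0 = ∅` and
`A_{t+1} = {i : p i + Σ_{j ∈ A_t, (j,i) ∈ E} d j i ≥ h i}`. -/
def propIter {V : Type*} [Fintype V] (E : Finset (V × V)) (d : V → V → ℝ)
    (h : V → ℝ) (p : V → ℝ) : ℕ → Finset V
  | 0 => ∅
  | t + 1 => Finset.univ.filter
      (fun i => h i ≤ p i + ∑ j ∈ (propIter E d h p t).filter (fun j => (j, i) ∈ E), d j i)

/-- Propagation closure `A(p) = A_n` with `n = |V|`. -/
def propClosure {V : Type*} [Fintype V] (E : Finset (V × V)) (d : V → V → ℝ)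
    (h : V → ℝ) (p : V → ℝ) : Finset V :=
  propIter E d h p (Fintype.card V)

/-! With nonnegative influence weights one propagation step is monotone, so the iterates from `∅`
increase and must stabilise within `|V|` steps: `A(p)` is a fixed point of the step. A vertex
`i ∈ X = V ∖ A(p)` thus misses its threshold even with all of `A(p)` active,
`p i + ∑_{j ∈ N_i ∖ X} d j i < h i`, so `p i` lies below every incentive that covers `i` against `X`. -/

open Function

theorem Finset.exists_eq_succ_le_card_of_monotone {α : Type*} [Fintype α] {f : ℕ → Finset α}
    (hf : Monotone f) : ∃ t ≤ Fintype.card α, f (t + 1) = f t := by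
  by_contra! hne
  have hgrow : ∀ t ≤ Fintype.card α + 1, t ≤ (f t).card := by
    intro t
    induction t with
    | zero => simp
    | succ t ih =>
      intro ht
      have hlt : f t ⊂ f (t + 1) := (hf t.le_succ).ssubset_of_ne (hne t (by omega)).symm
      have := Finset.card_lt_card hlt
      have := ih (by omega)
      omega
  have := hgrow _ le_rfl
  have := (f (Fintype.card α + 1)).card_le_univ
  omega

theorem Finset.isFixedPt_iterate_card_empty {α : Type*} [Fintype α] {F : Finset α → Finset α}
    (hF : Monotone F) : IsFixedPt F (F^[Fintype.card α] ∅) := by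
  obtain ⟨t, ht, hstable⟩ := Finset.exists_eq_succ_le_card_of_monotone
    (hF.monotone_iterate_of_le_map (Finset.empty_subset (F ∅)))
  have hfix : IsFixedPt F (F^[t] ∅) := by rwa [IsFixedPt, ← iterate_succ_apply' F t]
  rwa [← Nat.sub_add_cancel ht, iterate_add_apply, (hfix.iterate _).eq]

theorem Int.floor_natCast_sub {R : Type*} [Ring R] [LinearOrder R] [IsOrderedRing R]
    [FloorRing R] (n : ℕ) (a : R) : ⌊(n : R) - a⌋ = n - ⌈a⌉ := by
  rw [sub_eq_add_neg, Int.floor_natCast_add, Int.floor_neg, sub_eq_add_neg]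

section Propagation

variable {V : Type*} [Fintype V] (E : Finset (V × V)) (d : V → V → ℝ) (h : V → ℝ) (p : V → ℝ)

def propStep (A : Finset V) : Finset V :=
  univ.filter fun i => h i ≤ p i + ∑ j ∈ A.filter (fun j => (j, i) ∈ E), d j i

theorem propIter_eq_iterate (t : ℕ) : propIter E d h p t = (propStep E d h p)^[t] ∅ := by
  induction t with
  | zero => rfl
  | succ t ih => rw [iterate_succ_apply', ← ih]; rfl

theorem Nbr_sdiff_compl (A : Finset V) (i : V) :
    Nbr E i \ (univ \ A) = A.filter fun j => (j, i) ∈ E := by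
  ext j
  simp only [Nbr, mem_sdiff, mem_filter, mem_univ, true_and, not_not]
  tauto

variable {E d}

theorem propStep_mono (hd : ∀ a ∈ E, 0 ≤ d a.1 a.2) : Monotone (propStep E d h p) := by
  intro A B hAB i hi
  simp only [propStep, mem_filter, mem_univ, true_and] at hi ⊢
  exact hi.trans (add_le_add_right (sum_le_sum_of_subset_of_nonneg
    (filter_subset_filter _ hAB) fun j hj _ => hd (j, i) (mem_filter.mp hj).2) _)

theorem propClosure_isFixedPt (hd : ∀ a ∈ E, 0 ≤ d a.1 a.2) :
    IsFixedPt (propStep E d h p) (propClosure E d h p) := by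
  rw [propClosure, propIter_eq_iterate]
  exact Finset.isFixedPt_iterate_card_empty (propStep_mono h p hd)

theorem lt_threshold_of_not_mem_propClosure (hd : ∀ a ∈ E, 0 ≤ d a.1 a.2) {i : V}
    (hi : i ∉ propClosure E d h p) :
    p i + ∑ j ∈ Nbr E i \ (univ \ propClosure E d h p), d j i < h i := by
  rw [← (propClosure_isFixedPt h p hd).eq] at hi
  rw [Nbr_sdiff_compl]
  simpa [propStep] using hi

end Propagation

theorem integral_separation_correct_general {V : Type*} [Fintype V]
    (E : Finset (V × V)) (d : V → V → ℝ) (h : V → ℝ) (P : V → Finset ℝ) (α : ℝ)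
    (hd : ∀ a ∈ E, 0 < d a.1 a.2)
    (pt : Finset V → V → ℝ)
    (hpt : ∀ (X : Finset V), ∀ i ∈ X,
      IsLeast {q : ℝ | q ∈ P i ∧ h i ≤ q + ∑ j ∈ Nbr E i \ X, d j i} (pt X i))
    (p : V → ℝ)
    (hsmall : ((propClosure E d h p).card : ℤ) < ⌈α * (Fintype.card V : ℝ)⌉) :
    (((Finset.univ \ propClosure E d h p).card : ℤ)
        ≥ ⌊(1 - α) * (Fintype.card V : ℝ)⌋ + 1) ∧
    ∀ i ∈ Finset.univ \ propClosure E d h p,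
      p i < pt (Finset.univ \ propClosure E d h p) i := by
  set A := propClosure E d h p
  constructor
  · rw [card_univ_sdiff, Nat.cast_sub A.card_le_univ, sub_mul, one_mul, Int.floor_natCast_sub]
    omega
  · intro i hi
    have hmiss := lt_threshold_of_not_mem_propClosure h p (fun a ha => (hd a ha).le)
      (mem_sdiff.mp hi).2
    have hcover := (hpt _ i hi).1.2
    linarith

/-- Correctness of the integral separation procedure (Algorithm 1): if the propagation
closure activates fewer than `⌈α·n⌉` nodes, then `X = V ∖ A(p)` defines a violated
compact-formulation constraint. -/
theorem integral_separation_correct {V : Type*} [Fintype V]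
    (E : Finset (V × V)) (d : V → V → ℝ) (h : V → ℝ) (P : V → Finset ℝ) (α : ℝ)
    (hE : ∀ a ∈ E, a.1 ≠ a.2)
    (hd : ∀ a ∈ E, 0 < d a.1 a.2)
    (hh : ∀ i, 0 < h i)
    (hP0 : ∀ i, (0 : ℝ) ∈ P i)
    (hPnn : ∀ i, ∀ q ∈ P i, 0 ≤ q)
    (hα0 : 0 ≤ α) (hα1 : α ≤ 1)
    (hact : ∀ i, ∃ q ∈ P i, h i ≤ q)
    (pt : Finset V → V → ℝ)
    (hpt : ∀ (X : Finset V), ∀ i ∈ X,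
      IsLeast {q : ℝ | q ∈ P i ∧ h i ≤ q + ∑ j ∈ Nbr E i \ X, d j i} (pt X i))
    (p : V → ℝ) (hp : ∀ i, p i ∈ P i)
    (hsmall : ((propClosure E d h p).card : ℤ) < ⌈α * (Fintype.card V : ℝ)⌉) :
    (((Finset.univ \ propClosure E d h p).card : ℤ)
        ≥ ⌊(1 - α) * (Fintype.card V : ℝ)⌋ + 1) ∧
    ∀ i ∈ Finset.univ \ propClosure E d h p,
      p i < pt (Finset.univ \ propClosure E d h p) i :=
  integral_separation_correct_general E d h P α hd pt hpt p hsmall
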